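/- arXiv:2406.14058 — 4 statements merged into one kernel-verified Lean document; each statement's English description precedes it below -/
import Mathlib

section
/- On any domain with at least two elements, the teridentity relation I₃ = {(x,x,x) : x ∈ D} is not equal to any relation of the form {(x,y,z) : P(x,y) ∧ Q(z)} for binary P and unary Q, nor to any permutation of argument places of such a product. -/
/-- On a domain with at least two elements, teridentity is not (any permutation of
argument places of) a product `P(x,y) ∧ Q(z)` of a binary and a unary relation. -/
theorem stmt_3 (D : Type*) (a b : D) (hab : a ≠ b) :
    ¬ ∃ (P : D → D → Prop) (Q : D → Prop) (σ : Equiv.Perm (Fin 3)),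
      ∀ x y z : D,
        (x = y ∧ y = z) ↔ (P (![x, y, z] (σ 0)) (![x, y, z] (σ 1)) ∧ Q (![x, y, z] (σ 2))) := by
  rintro ⟨P, Q, σ, h⟩
  have hconstv : ∀ (c : D) (j : Fin 3), ![c, c, c] j = c := by
    intro c j; fin_cases j <;> rfl
  have ha := (h a a a).mp ⟨rfl, rfl⟩
  have hb := (h b b b).mp ⟨rfl, rfl⟩
  rw [hconstv, hconstv, hconstv] at ha
  rw [hconstv, hconstv, hconstv] at hb
  set v : Fin 3 → D := fun i => if i = σ 2 then b else a with hv
  have hvec : ![v 0, v 1, v 2] = v := by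
    funext i; fin_cases i <;> rfl
  have h2 := h (v 0) (v 1) (v 2)
  rw [hvec] at h2
  have h02 : σ 0 ≠ σ 2 := σ.injective.ne (by decide)
  have h12 : σ 1 ≠ σ 2 := σ.injective.ne (by decide)
  have hσ0 : v (σ 0) = a := by simp [hv, h02]
  have hσ1 : v (σ 1) = a := by simp [hv, h12]
  have hσ2 : v (σ 2) = b := by simp [hv]
  have heq := h2.mpr (by rw [hσ0, hσ1, hσ2]; exact ⟨ha.1, hb.2⟩)
  have hc : ∀ i : Fin 3, v i = v 0 := by
    intro i; fin_cases i
    · rfl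
    · exact heq.1.symm
    · exact (heq.1.trans heq.2).symm
  exact hab (by rw [← hσ0, hc (σ 0), ← hc (σ 2), hσ2])
end

section
/- Small-relation hypostatic abstraction without domain extension: if R ⊆ Dⁿ and there exists an injection f : R → D, then there exist binary relations R⁽¹⁾,…,R⁽ⁿ⁾ on D itself such that R(x₁,…,xₙ) ↔ ∃t ∈ D, R⁽¹⁾(t,x₁) ∧ … ∧ R⁽ⁿ⁾(t,xₙ). -/
/-- Small-relation hypostatic abstraction without domain extension: if `R ⊆ Dⁿ` (n ≥ 1)
admits an injection into `D`, then there are binary relations `R⁽¹⁾,…,R⁽ⁿ⁾` on `D` itself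
with `R(x₁,…,xₙ) ↔ ∃ t ∈ D, R⁽¹⁾(t,x₁) ∧ … ∧ R⁽ⁿ⁾(t,xₙ)`. -/
theorem stmt_9 (D : Type*) (n : ℕ) (hn : 0 < n) (R : Set (Fin n → D))
    (f : ↥R → D) (hf : Function.Injective f) :
    ∃ Ri : Fin n → D → D → Prop,
      ∀ x : Fin n → D, x ∈ R ↔ ∃ t : D, ∀ i : Fin n, Ri i t (x i) := by
  refine ⟨fun i t y => ∃ r : R, f r = t ∧ (r : Fin n → D) i = y, fun x => ?_⟩
  constructor
  · intro hx
    exact ⟨f ⟨x, hx⟩, fun i => ⟨⟨x, hx⟩, rfl, rfl⟩⟩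
  · rintro ⟨t, ht⟩
    obtain ⟨r0, hr0, -⟩ := ht ⟨0, hn⟩
    have hx : x = (r0 : Fin n → D) := by
      funext j
      obtain ⟨rj, hrj, hrjx⟩ := ht j
      have : rj = r0 := hf (hrj.trans hr0.symm)
      rw [← hrjx, this]
    rw [hx]
    exact r0.2
end

section
/- On an infinite domain, teridentity admits no partitioned disjunctive form over the partition {x,y},{z}: there do not exist finitely many binary relations P₁,…,P_k and unary relations Q₁,…,Q_k such that I₃(x,y,z) ↔ ⋁ᵢ (Pᵢ(x,y) ∧ Qᵢ(z)). -/
/-- On an infinite domain, teridentity admits no partitioned disjunctive form over the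
partition {x,y},{z}: no finite family of binary `Pᵢ` and unary `Qᵢ` satisfies
`I₃(x,y,z) ↔ ⋁ᵢ (Pᵢ(x,y) ∧ Qᵢ(z))`. -/
theorem stmt_15 (D : Type*) [Infinite D] :
    ¬ ∃ (k : ℕ) (P : Fin k → D → D → Prop) (Q : Fin k → D → Prop),
      ∀ x y z : D, (x = y ∧ y = z) ↔ ∃ i : Fin k, P i x y ∧ Q i z := by
  rintro ⟨k, P, Q, h⟩
  have hx : ∀ x : D, ∃ i : Fin k, P i x x ∧ Q i x := fun x =>
    (h x x x).mp ⟨rfl, rfl⟩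
  choose f hf using hx
  obtain ⟨x, y, hxy, hfeq⟩ := Finite.exists_ne_map_eq_of_infinite f
  exact hxy (((h x x y).mpr ⟨f x, (hf x).1, hfeq ▸ (hf y).2⟩).2)
end

section
/- If a finite disjunction ⋁ᵢ₌₁ᵏ (Pᵢ(x,y) ∧ Qᵢ(z)) agrees with teridentity on an infinite domain D, then by the pigeonhole principle there is an index i and an infinite subset S ⊆ D such that Pᵢ(a,a) ∧ Qᵢ(a) holds for all a ∈ S; moreover restricting to S, Pᵢ(x,y) ∧ Qᵢ(z) then holds of some triple with not all entries equal, a contradiction with teridentity on S having at least two elements. -/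
/-- If a finite disjunction `⋁ᵢ (Pᵢ(x,y) ∧ Qᵢ(z))` agrees with teridentity on an
infinite domain, a contradiction follows (no such finite family exists). -/
theorem stmt_16 (D : Type*) [Infinite D] (k : ℕ)
    (P : Fin k → D → D → Prop) (Q : Fin k → D → Prop)
    (h : ∀ x y z : D, (∃ i : Fin k, P i x y ∧ Q i z) ↔ (x = y ∧ y = z)) :
    False := by
  choose f hP hQ using fun a : D => (h a a a).mpr ⟨rfl, rfl⟩
  obtain ⟨a, b, hab, hfab⟩ := Finite.exists_ne_map_eq_of_infinite f
  exact hab ((h a a b).mp ⟨f a, hP a, hfab ▸ hQ b⟩).2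
end
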